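/- arXiv:2509.09312 — 2 statements merged into one kernel-verified Lean document; each statement's English description precedes it below -/
import Mathlib

section
/- Let G = (C, E) be a complete tournament and let w ∈ UC(G) be an uncovered-set winner of G. Then every minimal support X for w ∈ UC(G) is a w-rooted out-tree of depth at most 2: for every candidate c ≠ w there exists a unique directed path from w to c in X, and this path has length at most 2. -/
/-!
Orienting every pair left open by `X` against `w` (the target `c` beats everybody, everybody
beats `w`) gives a completion in which `w` reaches `c` within two steps only along edges of `X`;
so a necessary winner of UC in an asymmetric `X` is already uncovered in `X` itself. In a minimal
support, deleting an edge `(x, y)` with `x ≠ w` can only break the reachability of `y`, so that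
edge must be the unique second step of the only short route from `w` to `y`. This forces every
directed path from `w` to be `[w, c]` or `[w, z, c]`, and leaves exactly one of them for each `c`.
-/

/-- `E` is the edge set of a complete (unweighted) tournament on `C`:
asymmetric and total on distinct candidates. -/
def IsCompleteT {C : Type*} (E : Finset (C × C)) : Prop :=
  (∀ x y : C, (x, y) ∈ E → (y, x) ∉ E) ∧
  (∀ x y : C, x ≠ y → (x, y) ∈ E ∨ (y, x) ∈ E)

/-- `a` reaches `b` via a directed path of length at most two. -/
def Reach2 {C : Type*} (E : Finset (C × C)) (a b : C) : Prop :=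
  a = b ∨ (a, b) ∈ E ∨ ∃ z : C, (a, z) ∈ E ∧ (z, b) ∈ E

/-- Membership in the uncovered set: `c` reaches every other candidate via a
directed path of length at most two. -/
def InUC {C : Type*} (E : Finset (C × C)) (c : C) : Prop :=
  ∀ c' : C, Reach2 E c c'

/-- `w` is a necessary winner of UC in the partial tournament `X`. -/
def NWUC {C : Type*} (X : Finset (C × C)) (w : C) : Prop :=
  ∀ E' : Finset (C × C), X ⊆ E' → IsCompleteT E' → InUC E' w

/-- `X` is a minimal support for `w ∈ UC(G)`. -/
def MSUC {C : Type*} (G X : Finset (C × C)) (w : C) : Prop :=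
  X ⊆ G ∧ NWUC X w ∧ ∀ Y : Finset (C × C), Y ⊂ X → ¬ NWUC Y w

/-- `l` is a directed path from `a` to `b` along edges of `E`. A path on `k`
vertices (list of length `k`) has length `k - 1` as a path. -/
def IsDiPath {C : Type*} (E : Finset (C × C)) (a b : C) (l : List C) : Prop :=
  l.Nodup ∧ l.Chain' (fun x y => (x, y) ∈ E) ∧ l.head? = some a ∧ l.getLast? = some b

section Reachability

variable {C : Type*}

lemma Reach2.mono {E F : Finset (C × C)} (hEF : E ⊆ F) {a b : C} (h : Reach2 E a b) :
    Reach2 F a b := by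
  rcases h with rfl | hab | ⟨z, haz, hzb⟩
  · exact Or.inl rfl
  · exact Or.inr (Or.inl (hEF hab))
  · exact Or.inr (Or.inr ⟨z, hEF haz, hEF hzb⟩)

lemma nwuc_of_inUC {X : Finset (C × C)} {w : C} (h : InUC X w) : NWUC X w :=
  fun _ hXE _ c => (h c).mono hXE

lemma reach2_erase [DecidableEq C] {E : Finset (C × C)} {w x y c : C} (h : Reach2 E w c)
    (hx : x ≠ w) (hc : c ≠ y) : Reach2 (E.erase (x, y)) w c := by
  have hne {a b : C} (hab : a ≠ x ∨ b ≠ y) : (a, b) ≠ (x, y) := by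
    rintro ⟨⟩; simp at hab
  rcases h with rfl | hwc | ⟨z, hwz, hzc⟩
  · exact Or.inl rfl
  · exact Or.inr (Or.inl (Finset.mem_erase.mpr ⟨hne (Or.inr hc), hwc⟩))
  · exact Or.inr (Or.inr ⟨z, Finset.mem_erase.mpr ⟨hne (Or.inl (Ne.symm hx)), hwz⟩,
      Finset.mem_erase.mpr ⟨hne (Or.inr hc), hzc⟩⟩)

end Reachability

section Completion

variable {C : Type*} [DecidableEq C] [Fintype C] {α : Type*} [LinearOrder α]

def completeBy (X : Finset (C × C)) (key : C → α) : Finset (C × C) :=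
  X ∪ Finset.univ.filter fun p => (p.2, p.1) ∉ X ∧ key p.2 < key p.1

lemma mem_completeBy {X : Finset (C × C)} {key : C → α} {x y : C} :
    (x, y) ∈ completeBy X key ↔ (x, y) ∈ X ∨ ((y, x) ∉ X ∧ key y < key x) := by
  simp [completeBy]

lemma subset_completeBy (X : Finset (C × C)) (key : C → α) : X ⊆ completeBy X key :=
  Finset.subset_union_left

lemma isCompleteT_completeBy {X : Finset (C × C)} (hX : ∀ x y, (x, y) ∈ X → (y, x) ∉ X)
    {key : C → α} (hkey : Function.Injective key) : IsCompleteT (completeBy X key) := by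
  constructor
  · intro x y hxy hyx
    rw [mem_completeBy] at hxy hyx
    rcases hxy with hxy | ⟨hyx', hlt⟩ <;> rcases hyx with hyx | ⟨hxy', hlt'⟩
    · exact hX x y hxy hyx
    · exact hxy' hxy
    · exact hyx' hyx
    · exact lt_asymm hlt hlt'
  · intro x y hne
    simp only [mem_completeBy]
    by_cases hxy : (x, y) ∈ X
    · exact Or.inl (Or.inl hxy)
    by_cases hyx : (y, x) ∈ X
    · exact Or.inr (Or.inl hyx)
    rcases (hkey.ne hne).lt_or_gt with hlt | hlt
    · exact Or.inr (Or.inr ⟨hxy, hlt⟩)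
    · exact Or.inl (Or.inr ⟨hyx, hlt⟩)

lemma inUC_of_nwuc {X : Finset (C × C)} (hX : ∀ x y, (x, y) ∈ X → (y, x) ∉ X) {w : C}
    (hN : NWUC X w) : InUC X w := by
  intro c
  by_cases hcw : c = w
  · exact Or.inl hcw.symm
  let rank : C → ℕ := fun x => if x = c then 2 else if x = w then 0 else 1
  let key : C → Lex (ℕ × Fin (Fintype.card C)) := fun x => toLex (rank x, Fintype.equivFin C x)
  have hkey : Function.Injective key := fun x y h =>
    (Fintype.equivFin C).injective (congrArg Prod.snd (toLex.injective h))
  have key_lt {x y : C} (h : rank x < rank y) : key x < key y :=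
    Prod.Lex.toLex_lt_toLex.mpr (Or.inl h)
  have lt_key_c {z : C} (hz : z ≠ c) : key z < key c :=
    key_lt (by simp only [rank, if_pos rfl, if_neg hz]; split_ifs <;> omega)
  have key_w_lt {z : C} (hz : z ≠ w) : key w < key z :=
    key_lt (by simp only [rank, if_neg (Ne.symm hcw), if_neg hz]; split_ifs <;> omega)
  have hE := isCompleteT_completeBy hX hkey
  rcases hN _ (subset_completeBy X key) hE c with hwc | hwc | ⟨z, hwz, hzc⟩
  · exact absurd hwc.symm hcw
  · rcases mem_completeBy.mp hwc with hwc | ⟨-, hlt⟩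
    · exact Or.inr (Or.inl hwc)
    · exact absurd (lt_key_c (Ne.symm hcw)) (lt_asymm hlt)
  · have hzc' : z ≠ c := by rintro rfl; exact hE.1 z z hzc hzc
    have hzw : z ≠ w := by rintro rfl; exact hE.1 z z hwz hwz
    rcases mem_completeBy.mp hwz with hwz | ⟨-, hlt⟩
    · rcases mem_completeBy.mp hzc with hzc | ⟨-, hlt⟩
      · exact Or.inr (Or.inr ⟨z, hwz, hzc⟩)
      · exact absurd (lt_key_c hzc') (lt_asymm hlt)
    · exact absurd (key_w_lt hzw) (lt_asymm hlt)

end Completion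

namespace MSUC

variable {C : Type*} {G X : Finset (C × C)} {w x y : C}
variable (hG : IsCompleteT G) (hX : MSUC G X w)
include hG hX

lemma asymm (hxy : (x, y) ∈ X) : (y, x) ∉ X :=
  fun hyx => hG.1 x y (hX.1 hxy) (hX.1 hyx)

lemma ne_of_mem (hxy : (x, y) ∈ X) : x ≠ y := by
  rintro rfl; exact hX.asymm hG hxy hxy

variable [DecidableEq C] [Fintype C]

lemma inUC : InUC X w :=
  inUC_of_nwuc (fun _ _ => hX.asymm hG) hX.2.1

lemma edge_structure (hxy : (x, y) ∈ X) (hx : x ≠ w) :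
    (w, x) ∈ X ∧ (w, y) ∉ X ∧ ∀ z, (w, z) ∈ X → (z, y) ∈ X → z = x := by
  have hy : ¬ Reach2 (X.erase (x, y)) w y := by
    intro hy
    refine hX.2.2 _ (Finset.erase_ssubset hxy) (nwuc_of_inUC fun c => ?_)
    by_cases hc : c = y
    · exact hc ▸ hy
    · exact reach2_erase (hX.inUC hG c) hx hc
  have from_w {z : C} : (w, z) ≠ (x, y) := fun h => hx (congrArg Prod.fst h).symm
  have hyw : y ≠ w := fun h => hy (Or.inl h.symm)
  have hwy : (w, y) ∉ X := fun h => hy (Or.inr (Or.inl (Finset.mem_erase.mpr ⟨from_w, h⟩)))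
  have unique (z : C) (hwz : (w, z) ∈ X) (hzy : (z, y) ∈ X) : z = x := by
    by_contra hzx
    exact hy (Or.inr (Or.inr ⟨z, Finset.mem_erase.mpr ⟨from_w, hwz⟩,
      Finset.mem_erase.mpr ⟨fun h => hzx (congrArg Prod.fst h), hzy⟩⟩))
  obtain hwy' | hwy' | ⟨z, hwz, hzy⟩ := hX.inUC hG y
  · exact absurd hwy'.symm hyw
  · exact absurd hwy' hwy
  · exact ⟨unique z hwz hzy ▸ hwz, hwy, unique⟩

lemma isDiPath_iff {c : C} (hc : c ≠ w) {l : List C} :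
    IsDiPath X w c l ↔
      (l = [w, c] ∧ (w, c) ∈ X) ∨ ∃ z, l = [w, z, c] ∧ (w, z) ∈ X ∧ (z, c) ∈ X := by
  constructor
  · rintro ⟨hnd, hch, hhd, hlast⟩
    change l.IsChain fun a b => (a, b) ∈ X at hch
    match l, hnd, hch, hhd, hlast with
    | [a], _, _, hhd, hlast =>
      simp only [List.head?_cons, List.getLast?_singleton, Option.some.injEq] at hhd hlast
      exact absurd (hlast.symm.trans hhd) hc
    | [a, b], _, hch, hhd, hlast => simp_all
    | [a, b, d], _, hch, hhd, hlast => simp_all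
    | a :: b :: d :: e :: _, hnd, hch, hhd, _ =>
      simp only [List.head?_cons, Option.some.injEq] at hhd
      subst hhd
      simp only [List.isChain_cons_cons] at hch
      simp only [List.nodup_cons, List.mem_cons, not_or] at hnd
      exact absurd (hX.edge_structure hG hch.2.2.1 (Ne.symm hnd.1.2.1)).1
        (hX.edge_structure hG hch.2.1 (Ne.symm hnd.1.1)).2.1
  · rintro (⟨rfl, hwc⟩ | ⟨z, rfl, hwz, hzc⟩)
    · exact ⟨by simpa using Ne.symm hc, List.isChain_pair.mpr hwc, rfl, rfl⟩
    · refine ⟨?_, (List.isChain_pair.mpr hzc).cons_cons hwz, rfl, rfl⟩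
      simp [hX.ne_of_mem hG hwz, hX.ne_of_mem hG hzc, Ne.symm hc]

lemma exists_isDiPath {c : C} (hc : c ≠ w) : ∃ l, IsDiPath X w c l := by
  rcases hX.inUC hG c with hwc | hwc | ⟨z, hwz, hzc⟩
  · exact absurd hwc.symm hc
  · exact ⟨_, (hX.isDiPath_iff hG hc).2 (Or.inl ⟨rfl, hwc⟩)⟩
  · exact ⟨_, (hX.isDiPath_iff hG hc).2 (Or.inr ⟨z, rfl, hwz, hzc⟩)⟩

lemma isDiPath_unique {c : C} (hc : c ≠ w) {l l' : List C} (hl : IsDiPath X w c l)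
    (hl' : IsDiPath X w c l') : l = l' := by
  have no_two_step {z : C} (hwz : (w, z) ∈ X) (hzc : (z, c) ∈ X) : (w, c) ∉ X :=
    (hX.edge_structure hG hzc (hX.ne_of_mem hG hwz).symm).2.1
  rcases (hX.isDiPath_iff hG hc).1 hl with ⟨rfl, hwc⟩ | ⟨z, rfl, hwz, hzc⟩ <;>
    rcases (hX.isDiPath_iff hG hc).1 hl' with ⟨rfl, hwc'⟩ | ⟨z', rfl, hwz', hzc'⟩
  · rfl
  · exact absurd hwc (no_two_step hwz' hzc')
  · exact absurd hwc' (no_two_step hwz hzc)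
  · rw [(hX.edge_structure hG hzc (hX.ne_of_mem hG hwz).symm).2.2 z' hwz' hzc']

lemma length_le_three_of_isDiPath {c : C} (hc : c ≠ w) {l : List C} (hl : IsDiPath X w c l) :
    l.length ≤ 3 := by
  rcases (hX.isDiPath_iff hG hc).1 hl with ⟨rfl, -⟩ | ⟨z, rfl, -⟩ <;> simp

end MSUC

theorem stmt2_general {C : Type*} [Fintype C] [DecidableEq C]
    (G : Finset (C × C)) (hG : IsCompleteT G) (w : C)
    (X : Finset (C × C)) (hX : MSUC G X w) :
    ∀ c : C, c ≠ w →
      (∃! l : List C, IsDiPath X w c l) ∧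
      (∀ l : List C, IsDiPath X w c l → l.length ≤ 3) := by
  intro c hc
  obtain ⟨l, hl⟩ := hX.exists_isDiPath hG hc
  exact ⟨⟨l, hl, fun l' hl' => hX.isDiPath_unique hG hc hl' hl⟩,
    fun l' hl' => hX.length_le_three_of_isDiPath hG hc hl'⟩

/-- Every minimal support for an uncovered-set winner `w` is a `w`-rooted
out-tree of depth at most 2: for every `c ≠ w` there is a unique directed path
from `w` to `c`, and every such path has length at most 2 (at most 3 vertices). -/
theorem stmt2 {C : Type*} [Fintype C] [DecidableEq C] [Nonempty C]
    (G : Finset (C × C)) (hG : IsCompleteT G) (w : C) (hw : InUC G w)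
    (X : Finset (C × C)) (hX : MSUC G X w) :
    ∀ c : C, c ≠ w →
      (∃! l : List C, IsDiPath X w c l) ∧
      (∀ l : List C, IsDiPath X w c l → l.length ≤ 3) :=
  stmt2_general G hG w X hX
end

section
/- Let G = (C, μ) be a complete n-weighted tournament with |C| = m candidates and let w ∈ MM(G) be a maximin winner of G. Then every smallest minimal support X for w ∈ MM(G) satisfies ⌈n/2⌉ · (m − 1) ≤ |X| ≤ n(m − 1). -/
/-
Lower bound: for every candidate `v ≠ w`, complete a support `X` by ranking `v` on top and `w`
at the bottom, giving all undecided voters to the higher-ranked candidate. Then `w` scores at most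
`X(w,v)` while `v` scores `n - X(c,v)` against its worst opponent `c`, so `X(c,v) + X(w,v) ≥ n`
and column `v` of `X` carries weight at least `⌈n/2⌉`.

Upper bound: with `s = σ(w)` and `f v` an opponent realising `σ(v)`, the partial tournament
giving `s` to each edge `w → v` and `n - s` to each edge `f v → v` lies in `G` and already pins
every completion to `σ(w) ≥ s ≥ σ(v)`. Each of its columns weighs at most `n`, and it contains a
minimal support, which a smallest one cannot outweigh.
-/

/-- `μ` is a partial `n`-weighted tournament on `C`. -/
def IsPartialW {C : Type*} (n : ℕ) (μ : C → C → ℕ) : Prop :=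
  (∀ x, μ x x = 0) ∧ ∀ x y : C, x ≠ y → μ x y + μ y x ≤ n

/-- `μ` is a complete `n`-weighted tournament on `C`. -/
def IsCompleteW {C : Type*} (n : ℕ) (μ : C → C → ℕ) : Prop :=
  (∀ x, μ x x = 0) ∧ ∀ x y : C, x ≠ y → μ x y + μ y x = n

/-- `μ'` extends `μ` (pointwise larger weights), i.e. `μ ⊆ μ'`. -/
def ExtW {C : Type*} (μ μ' : C → C → ℕ) : Prop :=
  ∀ x y : C, μ x y ≤ μ' x y

/-- The size of a partial weighted tournament: total weight of all its edges. -/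
def sizeW {C : Type*} [Fintype C] (μ : C → C → ℕ) : ℕ :=
  ∑ x : C, ∑ y : C, μ x y

/-- The maximin score of `c` in `μ`: its worst performance `min_{c' ≠ c} μ(c,c')`. -/
noncomputable def mmScore {C : Type*} (μ : C → C → ℕ) (c : C) : ℕ :=
  sInf {k : ℕ | ∃ c' : C, c' ≠ c ∧ μ c c' = k}

/-- `c` is a maximin winner: its maximin score is maximal. -/
def InMM {C : Type*} (μ : C → C → ℕ) (c : C) : Prop :=
  ∀ c' : C, mmScore μ c' ≤ mmScore μ c

/-- `w` is a necessary winner of maximin in the partial `n`-weighted tournament `μX`. -/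
def NWMM {C : Type*} (n : ℕ) (μX : C → C → ℕ) (w : C) : Prop :=
  ∀ μ' : C → C → ℕ, ExtW μX μ' → IsCompleteW n μ' → InMM μ' w

/-- `μX` is a minimal support for `w ∈ MM(μ)`. -/
def MSMM {C : Type*} (n : ℕ) (μ μX : C → C → ℕ) (w : C) : Prop :=
  ExtW μX μ ∧ NWMM n μX w ∧
    ∀ μY : C → C → ℕ, ExtW μY μX → μY ≠ μX → ¬ NWMM n μY w

/-- `μX` is a smallest minimal support for `w ∈ MM(μ)`. -/
def SMSMM {C : Type*} [Fintype C] (n : ℕ) (μ μX : C → C → ℕ) (w : C) : Prop :=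
  MSMM n μ μX w ∧ ∀ μY : C → C → ℕ, MSMM n μ μY w → sizeW μX ≤ sizeW μY

section Tournament

variable {C : Type*} {n : ℕ}

theorem IsCompleteW.isPartialW {μ : C → C → ℕ} (h : IsCompleteW n μ) : IsPartialW n μ :=
  ⟨h.1, fun x y hxy => (h.2 x y hxy).le⟩

theorem IsPartialW.of_extW {μ μX : C → C → ℕ} (h : IsPartialW n μ) (hX : ExtW μX μ) :
    IsPartialW n μX :=
  ⟨fun x => Nat.le_zero.mp (h.1 x ▸ hX x x),
    fun x y hxy => (add_le_add (hX x y) (hX y x)).trans (h.2 x y hxy)⟩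

theorem ExtW.trans {μ₁ μ₂ μ₃ : C → C → ℕ} (h₁₂ : ExtW μ₁ μ₂) (h₂₃ : ExtW μ₂ μ₃) :
    ExtW μ₁ μ₃ :=
  fun x y => (h₁₂ x y).trans (h₂₃ x y)

end Tournament

section Size

variable {C : Type*} [Fintype C]

theorem sizeW_lt_sizeW {μ μ' : C → C → ℕ} (h : ExtW μ μ') (hne : μ ≠ μ') :
    sizeW μ < sizeW μ' := by
  obtain ⟨x, y, hxy⟩ : ∃ x y, μ x y ≠ μ' x y := by
    by_contra! hc
    exact hne (funext₂ hc)
  exact Finset.sum_lt_sum (fun i _ => Finset.sum_le_sum fun j _ => h i j)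
    ⟨x, Finset.mem_univ x, Finset.sum_lt_sum (fun j _ => h x j)
      ⟨y, Finset.mem_univ y, (h x y).lt_of_ne hxy⟩⟩

theorem mul_card_sub_one_le_sizeW {μ : C → C → ℕ} {k : ℕ} (w : C)
    (h : ∀ v, v ≠ w → k ≤ ∑ x, μ x v) : k * (Fintype.card C - 1) ≤ sizeW μ := by
  classical
  calc k * (Fintype.card C - 1) = ∑ _v ∈ Finset.univ.erase w, k := by
        simp [Finset.card_erase_of_mem, mul_comm]
    _ ≤ ∑ v ∈ Finset.univ.erase w, ∑ x, μ x v :=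
        Finset.sum_le_sum fun v hv => h v (Finset.ne_of_mem_erase hv)
    _ ≤ ∑ v, ∑ x, μ x v := Finset.sum_le_sum_of_subset (Finset.subset_univ _)
    _ = sizeW μ := Finset.sum_comm

theorem sizeW_le_mul_card_sub_one {μ : C → C → ℕ} {k : ℕ} (w : C) (h₀ : ∀ x, μ x w = 0)
    (h : ∀ v, v ≠ w → ∑ x, μ x v ≤ k) : sizeW μ ≤ k * (Fintype.card C - 1) := by
  classical
  calc sizeW μ = ∑ v, ∑ x, μ x v := Finset.sum_comm
    _ = ∑ v ∈ Finset.univ.erase w, ∑ x, μ x v :=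
        (Finset.sum_erase (f := fun v => ∑ x, μ x v) _ (by simp [h₀])).symm
    _ ≤ ∑ _v ∈ Finset.univ.erase w, k :=
        Finset.sum_le_sum fun v hv => h v (Finset.ne_of_mem_erase hv)
    _ = k * (Fintype.card C - 1) := by simp [Finset.card_erase_of_mem, mul_comm]

end Size

section Maximin

variable {C : Type*} (μ : C → C → ℕ)

theorem mmScore_le {c c' : C} (h : c' ≠ c) : mmScore μ c ≤ μ c c' :=
  Nat.sInf_le ⟨c', h, rfl⟩

theorem le_mmScore {c c' : C} (h : c' ≠ c) {k : ℕ} (hk : ∀ c', c' ≠ c → k ≤ μ c c') :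
    k ≤ mmScore μ c :=
  le_csInf ⟨_, c', h, rfl⟩ fun _ ⟨c', hc', hk'⟩ => hk' ▸ hk c' hc'

theorem exists_mmScore_eq {c c' : C} (h : c' ≠ c) : ∃ c', c' ≠ c ∧ μ c c' = mmScore μ c :=
  Nat.sInf_mem (s := {k | ∃ c', c' ≠ c ∧ μ c c' = k}) ⟨_, c', h, rfl⟩

theorem exists_worst_opponent (w : C) :
    ∃ f : C → C, ∀ v, v ≠ w → f v ≠ v ∧ μ v (f v) = mmScore μ v := by
  have : Nonempty C := ⟨w⟩
  choose! f hf using fun v (hv : v ≠ w) => exists_mmScore_eq μ (c' := w) hv.symm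
  exact ⟨f, hf⟩

theorem mmScore_le_of_isPartialW {n : ℕ} (h : IsPartialW n μ) (c : C) : mmScore μ c ≤ n := by
  by_cases hc : ∃ c', c' ≠ c
  · obtain ⟨c', hc'⟩ := hc
    exact (mmScore_le μ hc').trans ((Nat.le_add_right _ _).trans (h.2 c c' hc'.symm))
  · push Not at hc
    simp [mmScore, hc]

end Maximin

section MinimalSupport

variable {C : Type*} [Fintype C] {n : ℕ} {μ : C → C → ℕ} {w : C}

theorem NWMM.exists_msmm_sizeW_le {μY : C → C → ℕ} (hY : ExtW μY μ) (hnw : NWMM n μY w) :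
    ∃ μZ, MSMM n μ μZ w ∧ sizeW μZ ≤ sizeW μY := by
  induction hs : sizeW μY using Nat.strong_induction_on generalizing μY with
  | _ s ih =>
    by_cases hmin : ∃ μ', ExtW μ' μY ∧ μ' ≠ μY ∧ NWMM n μ' w
    · obtain ⟨μ', hext, hne, hnw'⟩ := hmin
      have hlt := sizeW_lt_sizeW hext hne
      obtain ⟨μZ, hZ, hle⟩ := ih _ (hs ▸ hlt) (hext.trans hY) hnw' rfl
      exact ⟨μZ, hZ, hs ▸ hle.trans hlt.le⟩
    · push Not at hmin
      exact ⟨μY, ⟨hY, hnw, fun μ' hext hne => hmin μ' hext hne⟩, hs.le⟩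

theorem SMSMM.sizeW_le {μX μY : C → C → ℕ} (hX : SMSMM n μ μX w) (hY : ExtW μY μ)
    (hnw : NWMM n μY w) : sizeW μX ≤ sizeW μY :=
  let ⟨_, hZ, hle⟩ := hnw.exists_msmm_sizeW_le hY
  (hX.2 _ hZ).trans hle

end MinimalSupport

section RankCompletion

variable {C α : Type*} [LinearOrder α] {n : ℕ} {μX : C → C → ℕ} {g : C → α}

/-- Every undecided voter prefers the candidate ranked higher by `g`. -/
def rankCompletion (n : ℕ) (μX : C → C → ℕ) (g : C → α) (x y : C) : ℕ :=
  if g y < g x then n - μX y x else μX x y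

theorem rankCompletion_of_lt {x y : C} (h : g y < g x) :
    rankCompletion n μX g x y = n - μX y x :=
  if_pos h

theorem rankCompletion_of_not_lt {x y : C} (h : ¬ g y < g x) :
    rankCompletion n μX g x y = μX x y :=
  if_neg h

theorem extW_rankCompletion (h : IsPartialW n μX) : ExtW μX (rankCompletion n μX g) := by
  intro x y
  by_cases hxy : g y < g x
  · have hne : x ≠ y := by rintro rfl; exact lt_irrefl _ hxy
    have := h.2 x y hne
    rw [rankCompletion_of_lt hxy]
    omega
  · rw [rankCompletion_of_not_lt hxy]

theorem isCompleteW_rankCompletion (h : IsPartialW n μX) (hg : Function.Injective g) :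
    IsCompleteW n (rankCompletion n μX g) := by
  refine ⟨fun x => by rw [rankCompletion_of_not_lt (lt_irrefl _), h.1], fun x y hxy => ?_⟩
  have hle := h.2 x y hxy
  rcases (hg.ne hxy).lt_or_gt with hlt | hlt
  · rw [rankCompletion_of_not_lt hlt.not_gt, rankCompletion_of_lt hlt]
    omega
  · rw [rankCompletion_of_lt hlt, rankCompletion_of_not_lt hlt.not_gt]
    omega

end RankCompletion

theorem exists_injective_bot_top {C : Type*} [Countable C] {v w : C} (hvw : v ≠ w) :
    ∃ g : C → ℕ ×ₗ ℕ, Function.Injective g ∧ (∀ y, y ≠ w → g w < g y) ∧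
      ∀ c, c ≠ v → g c < g v := by
  classical
  obtain ⟨e, he⟩ := Countable.exists_injective_nat C
  let tier (x : C) : ℕ := if x = w then 0 else if x = v then 2 else 1
  refine ⟨fun x => toLex (tier x, e x), fun x y hxy => he (congrArg Prod.snd (toLex.injective hxy)),
    fun y hy => ?_, fun c hc => ?_⟩
  · exact Prod.Lex.toLex_lt_toLex.2 (Or.inl (by grind))
  · exact Prod.Lex.toLex_lt_toLex.2 (Or.inl (by grind))

section LowerBound

variable {C : Type*} {n : ℕ} {μX : C → C → ℕ} {w : C}

theorem NWMM.exists_le_add [Countable C] (h : IsPartialW n μX) (hnw : NWMM n μX w) {v : C}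
    (hvw : v ≠ w) : ∃ c, c ≠ v ∧ n ≤ μX c v + μX w v := by
  obtain ⟨g, hg, hw, hv⟩ := exists_injective_bot_top hvw
  set μ' := rankCompletion n μX g
  obtain ⟨c, hcv, hc⟩ := exists_mmScore_eq μ' (c' := w) hvw.symm
  have hwin : mmScore μ' v ≤ mmScore μ' w :=
    hnw μ' (extW_rankCompletion h) (isCompleteW_rankCompletion h hg) v
  have hw_le : mmScore μ' w ≤ μX w v :=
    (mmScore_le μ' hvw).trans_eq (rankCompletion_of_not_lt (hw v hvw).not_gt)
  have hv_eq : μ' v c = n - μX c v := rankCompletion_of_lt (hv c hcv)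
  exact ⟨c, hcv, by omega⟩

theorem NWMM.half_le_sum [Fintype C] (h : IsPartialW n μX) (hnw : NWMM n μX w) {v : C}
    (hvw : v ≠ w) : (n + 1) / 2 ≤ ∑ x, μX x v := by
  obtain ⟨c, -, hc⟩ := hnw.exists_le_add h hvw
  have hc_le : μX c v ≤ ∑ x, μX x v :=
    Finset.single_le_sum (f := fun x => μX x v) (fun _ _ => Nat.zero_le _) (Finset.mem_univ c)
  have hw_le : μX w v ≤ ∑ x, μX x v :=
    Finset.single_le_sum (f := fun x => μX x v) (fun _ _ => Nat.zero_le _) (Finset.mem_univ w)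
  omega

end LowerBound

section Certificate

variable {C : Type*} [DecidableEq C] {n s : ℕ} {w : C} {f : C → C}

def mmCertificate (n s : ℕ) (w : C) (f : C → C) (x y : C) : ℕ :=
  if y = w then 0 else max (if x = w then s else 0) (if x = f y then n - s else 0)

theorem extW_mmCertificate {μ : C → C → ℕ} (hG : IsCompleteW n μ) (hw : InMM μ w)
    (hf : ∀ v, v ≠ w → f v ≠ v ∧ μ v (f v) = mmScore μ v) :
    ExtW (mmCertificate n (mmScore μ w) w f) μ := by
  intro x y
  rcases eq_or_ne y w with rfl | hyw
  · simp [mmCertificate]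
  have hwy : mmScore μ w ≤ μ w y := mmScore_le μ hyw
  have hfy : n - mmScore μ w ≤ μ (f y) y := by
    obtain ⟨hne, hmin⟩ := hf y hyw
    have := hG.2 y (f y) hne.symm
    have := hw y
    omega
  simp only [mmCertificate, if_neg hyw]
  refine max_le ?_ ?_ <;> split_ifs with hx <;> first | exact Nat.zero_le _ | (subst hx; assumption)

theorem nwmm_mmCertificate (hf : ∀ v, v ≠ w → f v ≠ v) : NWMM n (mmCertificate n s w f) w := by
  intro μ' hext hcomp v
  rcases eq_or_ne v w with rfl | hvw
  · exact le_rfl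
  have hw_ge : s ≤ mmScore μ' w := by
    refine le_mmScore μ' hvw fun y hyw => (hext w y).trans' ?_
    simp [mmCertificate, hyw]
  have hfv : n - s ≤ μ' (f v) v := (hext (f v) v).trans' (by simp [mmCertificate, hvw])
  have hsum := hcomp.2 v (f v) (hf v hvw).symm
  calc mmScore μ' v ≤ μ' v (f v) := mmScore_le μ' (hf v hvw)
    _ ≤ s := by omega
    _ ≤ mmScore μ' w := hw_ge

theorem sizeW_mmCertificate_le [Fintype C] (hs : s ≤ n) :
    sizeW (mmCertificate n s w f) ≤ n * (Fintype.card C - 1) := by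
  refine sizeW_le_mul_card_sub_one w (fun x => by simp [mmCertificate]) fun y hyw => ?_
  calc ∑ x, mmCertificate n s w f x y
      ≤ ∑ x, ((if x = w then s else 0) + (if x = f y then n - s else 0)) :=
        Finset.sum_le_sum fun x _ => by
          simp only [mmCertificate, if_neg hyw]
          exact max_le (Nat.le_add_right _ _) (Nat.le_add_left _ _)
    _ = n := by simp [Finset.sum_add_distrib, hs]

end Certificate

theorem stmt9_general {C : Type*} [Fintype C] [DecidableEq C]
    (n m : ℕ) (hm : Fintype.card C = m)
    (μ : C → C → ℕ) (hG : IsCompleteW n μ)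
    (w : C) (hw : InMM μ w) (μX : C → C → ℕ) (hX : SMSMM n μ μX w) :
    (n + 1) / 2 * (m - 1) ≤ sizeW μX ∧ sizeW μX ≤ n * (m - 1) := by
  subst hm
  obtain ⟨hXμ, hnw, -⟩ := hX.1
  have hXpartial := hG.isPartialW.of_extW hXμ
  refine ⟨mul_card_sub_one_le_sizeW w fun v hvw => hnw.half_le_sum hXpartial hvw, ?_⟩
  obtain ⟨f, hf⟩ := exists_worst_opponent μ w
  calc sizeW μX ≤ sizeW (mmCertificate n (mmScore μ w) w f) :=
        hX.sizeW_le (extW_mmCertificate hG hw hf) (nwmm_mmCertificate fun v hvw => (hf v hvw).1)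
    _ ≤ n * (Fintype.card C - 1) :=
        sizeW_mmCertificate_le (mmScore_le_of_isPartialW μ hG.isPartialW w)

/-- Bounds on smallest minimal supports for maximin:
`⌈n/2⌉(m-1) ≤ |μX| ≤ n(m-1)`. -/
theorem stmt9 {C : Type*} [Fintype C] [DecidableEq C] [Nonempty C]
    (n m : ℕ) (hn : 0 < n) (hm : Fintype.card C = m)
    (μ : C → C → ℕ) (hG : IsCompleteW n μ)
    (w : C) (hw : InMM μ w) (μX : C → C → ℕ) (hX : SMSMM n μ μX w) :
    (n + 1) / 2 * (m - 1) ≤ sizeW μX ∧ sizeW μX ≤ n * (m - 1) :=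
  stmt9_general n m hm μ hG w hw μX hX
end
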